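/- Let X, Y be n×n positive semidefinite complex matrices with eigenvalues arranged in decreasing order μ₁(X) ≥ ... ≥ μₙ(X) and μ₁(Y) ≥ ... ≥ μₙ(Y). If X and Y are positive definite, then Tr(log(X+Y)) ≥ Σ_{k=1}^n log(μ_k(X) + μ_k(Y)). -/

import Mathlib

open scoped BigOperators ComplexOrder
open Matrix

open Classical in
noncomputable def trFun {I : Type*} [Fintype I] [DecidableEq I]
    (f : ℝ → ℝ) (A : Matrix I I ℂ) : ℝ :=
  if hA : A.IsHermitian then ∑ i, f (hA.eigenvalues i) else 0

open Classical in
noncomputable def psqrt {I : Type*} [Fintype I] [DecidableEq I]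
    (A : Matrix I I ℂ) : Matrix I I ℂ :=
  if hA : A.PosSemidef then
    (hA.1.eigenvectorUnitary : Matrix I I ℂ) * diagonal ((↑) ∘ Real.sqrt ∘ hA.1.eigenvalues) *
      (star hA.1.eigenvectorUnitary : Matrix I I ℂ)
  else 0

noncomputable def geoMean {I : Type*} [Fintype I] [DecidableEq I]
    (A B : Matrix I I ℂ) : Matrix I I ℂ :=
  psqrt A * psqrt ((psqrt A)⁻¹ * B * (psqrt A)⁻¹) * psqrt A

noncomputable def dsqLog {I : Type*} [Fintype I] [DecidableEq I]
    (A B : Matrix I I ℂ) : ℝ :=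
  trFun Real.log (((1 : ℝ) / 2) • (A + B))
    - (1 / 2) * trFun Real.log A - (1 / 2) * trFun Real.log B

noncomputable def Jdiv {I : Type*} [Fintype I] [DecidableEq I]
    (A B : Matrix I I ℂ) : ℝ :=
  (1 / 2) * trFun (fun x => x * Real.log x) A
    + (1 / 2) * trFun (fun x => x * Real.log x) B
    - trFun (fun x => x * Real.log x) (((1 : ℝ) / 2) • (A + B))

/-! ### Auxiliary lemmas -/

section Aux

open Finset

variable {n : ℕ}

/-- Abel summation bound: if `c` is monotone on `[0,n)`, the partial sums of `d` over
`range k` are nonnegative for `k ≤ n` and the total sum is zero, then `∑ c i * d i ≤ 0`. -/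
lemma aux_abel_nonpos (n : ℕ) (c d : ℕ → ℝ)
    (hc : ∀ i j, i ≤ j → j < n → c i ≤ c j)
    (hD : ∀ k, k ≤ n → 0 ≤ ∑ i ∈ range k, d i)
    (hDn : ∑ i ∈ range n, d i = 0) :
    ∑ i ∈ range n, c i * d i ≤ 0 := by
  have h := Finset.sum_range_by_parts c d n
  simp only [smul_eq_mul] at h
  rw [h, hDn, mul_zero, zero_sub, neg_nonpos]
  apply Finset.sum_nonneg
  intro i hi
  rw [Finset.mem_range] at hi
  have h1 : i + 1 < n := by omega
  exact mul_nonneg (by linarith [hc i (i+1) (by omega) h1]) (hD (i+1) (by omega))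

/-- Hardy–Littlewood–Pólya type inequality for the (concave) logarithm. -/
lemma aux_hlp_log (n : ℕ) (x y : ℕ → ℝ)
    (hx : ∀ i, i < n → 0 < x i) (hy : ∀ i, i < n → 0 < y i)
    (hanti : ∀ i j, i ≤ j → j < n → x j ≤ x i)
    (hpart : ∀ k, k ≤ n → ∑ i ∈ range k, x i ≤ ∑ i ∈ range k, y i)
    (htot : ∑ i ∈ range n, x i = ∑ i ∈ range n, y i) :
    ∑ i ∈ range n, Real.log (y i) ≤ ∑ i ∈ range n, Real.log (x i) := by
  have key : ∑ i ∈ range n, (x i)⁻¹ * (y i - x i) ≤ 0 := by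
    apply aux_abel_nonpos n _ _
    · intro i j hij hj
      exact inv_anti₀ (hx j hj) (hanti i j hij hj)
    · intro k hk
      have := hpart k hk
      rw [Finset.sum_sub_distrib]
      linarith
    · rw [Finset.sum_sub_distrib]; linarith
  have step : ∀ i ∈ range n, Real.log (y i) ≤ Real.log (x i) + (x i)⁻¹ * (y i - x i) := by
    intro i hi
    rw [Finset.mem_range] at hi
    have hxi := hx i hi
    have hyi := hy i hi
    have h1 : Real.log (y i / x i) ≤ y i / x i - 1 :=
      Real.log_le_sub_one_of_pos (div_pos hyi hxi)
    rw [Real.log_div hyi.ne' hxi.ne'] at h1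
    have : y i / x i - 1 = (x i)⁻¹ * (y i - x i) := by
      field_simp
    linarith [this ▸ h1]
  calc ∑ i ∈ range n, Real.log (y i)
      ≤ ∑ i ∈ range n, (Real.log (x i) + (x i)⁻¹ * (y i - x i)) := Finset.sum_le_sum step
    _ = ∑ i ∈ range n, Real.log (x i) + ∑ i ∈ range n, (x i)⁻¹ * (y i - x i) := by
        rw [Finset.sum_add_distrib]
    _ ≤ ∑ i ∈ range n, Real.log (x i) := by linarith

/-- Extend a `Fin n` tuple by zero. -/
noncomputable def ext0 (f : Fin n → ℝ) : ℕ → ℝ :=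
  fun i => if h : i < n then f ⟨i, h⟩ else 0

lemma sum_filter_eq_sum_range (f : Fin n → ℝ) (k : ℕ) (hk : k ≤ n) :
    ∑ i ∈ Finset.univ.filter (fun i : Fin n => (i : ℕ) < k), f i
      = ∑ i ∈ range k, ext0 f i := by
  have h1 : ∑ i ∈ Finset.univ.filter (fun i : Fin n => (i : ℕ) < k), f i
      = ∑ i : Fin n, (if (i : ℕ) < k then f i else 0) := Finset.sum_filter _ _
  have h2 : ∑ i : Fin n, (if (i : ℕ) < k then f i else 0)
      = ∑ i ∈ range n, (if i < k then ext0 f i else 0) := by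
    rw [← Fin.sum_univ_eq_sum_range (fun i => if i < k then ext0 f i else 0) n]
    apply Finset.sum_congr rfl
    intro i _
    by_cases h : (i : ℕ) < k <;> simp [h, ext0, i.isLt]
  have h3 : ∑ i ∈ range n, (if i < k then ext0 f i else 0) = ∑ i ∈ range k, ext0 f i := by
    rw [← Finset.sum_subset (Finset.range_subset_range.mpr hk)
      (fun x _ hx => by simp [Finset.mem_range.not.mp hx] )]
    exact Finset.sum_congr rfl fun i hi => if_pos (Finset.mem_range.mp hi)
  rw [h1, h2, h3]

/-- Top-k linear bound: an antitone `lam` against a substochastic weight `t` of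
total mass `k` is at most the sum of the first `k` values of `lam`. -/
lemma sum_mul_le_topk (k : ℕ) (hk : k ≤ n) (lam t : Fin n → ℝ) (hlam : Antitone lam)
    (ht0 : ∀ i, 0 ≤ t i) (ht1 : ∀ i, t i ≤ 1) (hts : ∑ i, t i = (k : ℝ)) :
    ∑ i, lam i * t i ≤ ∑ i ∈ Finset.univ.filter (fun i : Fin n => (i : ℕ) < k), lam i := by
  rcases eq_or_lt_of_le hk with heq | hlt'
  · -- k = n: all t i = 1
    have hall : ∀ i, t i = 1 := by
      intro i
      by_contra hne
      have hlt1 : t i < 1 := lt_of_le_of_ne (ht1 i) hne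
      have : ∑ j, t j < ∑ j : Fin n, (1 : ℝ) := by
        apply Finset.sum_lt_sum (fun j _ => ht1 j) ⟨i, Finset.mem_univ i, hlt1⟩
      simp [hts, heq] at this
    have hfu : Finset.univ.filter (fun i : Fin n => (i : ℕ) < k) = Finset.univ :=
      Finset.filter_true_of_mem (fun i _ => heq ▸ i.isLt)
    rw [hfu]
    exact le_of_eq (Finset.sum_congr rfl fun i _ => by rw [hall i, mul_one])
  · have hlt := hlt'
    set c := lam ⟨k, hlt⟩ with hc
    have key : ∑ i, lam i * t i - ∑ i ∈ Finset.univ.filter (fun i : Fin n => (i : ℕ) < k), lam i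
        ≤ c * (∑ i, t i - k) := by
      have split1 : ∑ i, lam i * t i
          = ∑ i ∈ Finset.univ.filter (fun i : Fin n => (i : ℕ) < k), lam i * t i
            + ∑ i ∈ Finset.univ.filter (fun i : Fin n => ¬ (i : ℕ) < k), lam i * t i :=
        (Finset.sum_filter_add_sum_filter_not _ _ _).symm
      have split2 : ∑ i, t i
          = ∑ i ∈ Finset.univ.filter (fun i : Fin n => (i : ℕ) < k), t i
            + ∑ i ∈ Finset.univ.filter (fun i : Fin n => ¬ (i : ℕ) < k), t i :=
        (Finset.sum_filter_add_sum_filter_not _ _ _).symm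
      rw [split1, split2]
      have b1 : ∑ i ∈ Finset.univ.filter (fun i : Fin n => (i : ℕ) < k), (lam i * t i - lam i)
          ≤ ∑ i ∈ Finset.univ.filter (fun i : Fin n => (i : ℕ) < k), c * (t i - 1) := by
        apply Finset.sum_le_sum
        intro i hi
        rw [Finset.mem_filter] at hi
        have hle : c ≤ lam i := hlam (by simp [Fin.le_def]; omega)
        have : lam i * t i - lam i = lam i * (t i - 1) := by ring
        rw [this]
        have ht : t i - 1 ≤ 0 := by linarith [ht1 i]
        nlinarith
      have b2 : ∑ i ∈ Finset.univ.filter (fun i : Fin n => ¬ (i : ℕ) < k), lam i * t i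
          ≤ ∑ i ∈ Finset.univ.filter (fun i : Fin n => ¬ (i : ℕ) < k), c * t i := by
        apply Finset.sum_le_sum
        intro i hi
        rw [Finset.mem_filter] at hi
        have hle : lam i ≤ c := hlam (by simp [Fin.le_def]; omega)
        nlinarith [ht0 i]
      rw [Finset.sum_sub_distrib] at b1
      have expand : c * ((∑ i ∈ Finset.univ.filter (fun i : Fin n => (i : ℕ) < k), t i
            + ∑ i ∈ Finset.univ.filter (fun i : Fin n => ¬ (i : ℕ) < k), t i) - k)
          = ∑ i ∈ Finset.univ.filter (fun i : Fin n => (i : ℕ) < k), c * (t i - 1)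
            + ∑ i ∈ Finset.univ.filter (fun i : Fin n => ¬ (i : ℕ) < k), c * t i
            + c * ((Finset.univ.filter (fun i : Fin n => (i : ℕ) < k)).card - k) := by
        simp only [Finset.sum_sub_distrib, mul_sub, mul_one,
          Finset.sum_const, nsmul_eq_mul, ← Finset.mul_sum]
        ring
      have hcard : ((Finset.univ.filter (fun i : Fin n => (i : ℕ) < k)).card : ℝ) = k := by
        have hone := sum_filter_eq_sum_range (fun _ : Fin n => (1 : ℝ)) k hk
        rw [Finset.sum_const, nsmul_eq_mul, mul_one] at hone
        rw [hone]
        rw [Finset.sum_congr rfl (fun i hi => show ext0 (fun _ : Fin n => (1:ℝ)) i = 1 by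
          simp [ext0, dif_pos (lt_of_lt_of_le (Finset.mem_range.mp hi) hk)])]
        simp
      rw [expand, hcard]
      simp only [sub_self, mul_zero, add_zero]
      linarith
    rw [hts] at key
    simp at key
    linarith

/-- Ky Fan type bound: the trace of a compression of a Hermitian matrix to `k`
orthonormal columns is at most the sum of its `k` largest eigenvalues. -/
lemma trace_compress_le (A : Matrix (Fin n) (Fin n) ℂ) (hA : A.IsHermitian)
    (k : ℕ) (hk : k ≤ n) (V : Matrix (Fin n) (Fin k) ℂ) (hV : Vᴴ * V = 1)
    (lam : Fin n → ℝ) (π : Equiv.Perm (Fin n)) (hπ : lam = hA.eigenvalues ∘ π)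
    (hlam : Antitone lam) :
    ((Vᴴ * A * V).trace).re
      ≤ ∑ i ∈ Finset.univ.filter (fun i : Fin n => (i : ℕ) < k), lam i := by
  set U : Matrix (Fin n) (Fin n) ℂ := (hA.eigenvectorUnitary : Matrix (Fin n) (Fin n) ℂ) with hU
  have hUU' : Uᴴ * U = 1 := by
    rw [← Matrix.star_eq_conjTranspose]
    exact (Matrix.mem_unitaryGroup_iff').mp hA.eigenvectorUnitary.2
  have hUU : U * Uᴴ = 1 := by
    rw [← Matrix.star_eq_conjTranspose]
    exact (Matrix.mem_unitaryGroup_iff).mp hA.eigenvectorUnitary.2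
  set D : Matrix (Fin n) (Fin n) ℂ := Matrix.diagonal (Complex.ofReal ∘ hA.eigenvalues) with hD
  have hspec : A = U * D * Uᴴ := by
    rw [hU, hD, ← Matrix.star_eq_conjTranspose]
    exact_mod_cast hA.spectral_theorem
  set W : Matrix (Fin n) (Fin k) ℂ := Uᴴ * V with hW
  have hWH : Wᴴ = Vᴴ * U := by
    rw [hW, Matrix.conjTranspose_mul, Matrix.conjTranspose_conjTranspose]
  have hWW : Wᴴ * W = 1 := by
    rw [hWH, hW, Matrix.mul_assoc, ← Matrix.mul_assoc U Uᴴ V, hUU, Matrix.one_mul, hV]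
  set P : Matrix (Fin n) (Fin n) ℂ := W * Wᴴ with hP
  have hP2 : P * P = P := by
    rw [hP, Matrix.mul_assoc, ← Matrix.mul_assoc Wᴴ W Wᴴ, hWW, Matrix.one_mul]
  have hPH : Pᴴ = P := by
    rw [hP, Matrix.conjTranspose_mul, Matrix.conjTranspose_conjTranspose]
  set t : Fin n → ℝ := fun i => ∑ j, Complex.normSq (W i j) with ht
  have hPdiag : ∀ i, P i i = ((t i : ℝ) : ℂ) := by
    intro i
    simp only [hP, Matrix.mul_apply, Matrix.conjTranspose_apply, ht]
    push_cast
    congr 1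
    ext j
    rw [← Complex.mul_conj]
    rfl
  have ht0 : ∀ i, 0 ≤ t i := fun i =>
    Finset.sum_nonneg fun j _ => Complex.normSq_nonneg _
  have ht1 : ∀ i, t i ≤ 1 := by
    intro i
    have h1 : P i i = ∑ j, ((Complex.normSq (P i j) : ℝ) : ℂ) := by
      conv_lhs => rw [← hP2]
      rw [Matrix.mul_apply]
      congr 1
      ext j
      have : P j i = (starRingEnd ℂ) (P i j) := by
        conv_lhs => rw [← hPH]
        rfl
      rw [this, Complex.mul_conj]
    have h2 : (t i : ℂ) = ∑ j, ((Complex.normSq (P i j) : ℝ) : ℂ) := by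
      rw [← hPdiag i]; exact h1
    have h3 : t i = ∑ j, Complex.normSq (P i j) := by
      exact_mod_cast h2
    have h4 : Complex.normSq (P i i) ≤ ∑ j, Complex.normSq (P i j) :=
      Finset.single_le_sum (fun j _ => Complex.normSq_nonneg _) (Finset.mem_univ i)
    have h5 : Complex.normSq (P i i) = t i * t i := by
      rw [hPdiag i, Complex.normSq_ofReal]
    nlinarith [ht0 i, h3 ▸ h4, h5]
  have hts : ∑ i, t i = (k : ℝ) := by
    have e1 : Matrix.trace P = Matrix.trace (Wᴴ * W) := Matrix.trace_mul_comm W Wᴴ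
    have e2 : Matrix.trace P = (k : ℂ) := by rw [e1, hWW]; simp [Matrix.trace_one]
    have e3 : Matrix.trace P = ((∑ i, t i : ℝ) : ℂ) := by
      rw [Matrix.trace]
      push_cast
      exact Finset.sum_congr rfl fun i _ => hPdiag i
    have := e3.symm.trans e2
    exact_mod_cast this
  have htr : (Vᴴ * A * V).trace = ∑ i, ((hA.eigenvalues i : ℝ) : ℂ) * ((t i : ℝ) : ℂ) := by
    have e1 : Vᴴ * A * V = Wᴴ * D * W := by
      rw [hspec, hWH, hW]
      simp only [Matrix.mul_assoc]
    have e2 : (Wᴴ * D * W).trace = (D * P).trace := by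
      rw [Matrix.trace_mul_comm (Wᴴ * D) W, ← Matrix.mul_assoc,
        Matrix.trace_mul_comm (W * Wᴴ) D, hP]
    have e3 : (D * P).trace = ∑ i, ((hA.eigenvalues i : ℝ) : ℂ) * P i i := by
      simp [hD, Matrix.trace, Matrix.diag, Matrix.diagonal_mul]
    rw [e1, e2, e3]
    exact Finset.sum_congr rfl fun i _ => by rw [hPdiag i]
  have hre : ((Vᴴ * A * V).trace).re = ∑ i, hA.eigenvalues i * t i := by
    rw [htr]
    rw [Complex.re_sum]
    apply Finset.sum_congr rfl
    intro i _
    simp [Complex.ofReal_mul]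
  rw [hre]
  have hre2 : ∑ i, hA.eigenvalues i * t i = ∑ i, lam i * (t ∘ π) i := by
    rw [← Equiv.sum_comp π (fun i => hA.eigenvalues i * t i)]
    exact Finset.sum_congr rfl fun i _ => by simp [hπ]
  rw [hre2]
  apply sum_mul_le_topk k hk lam (t ∘ π) hlam (fun i => ht0 _) (fun i => ht1 _)
  rw [← hts]
  exact Equiv.sum_comp π t

/-- There is an isometry realizing the sum of eigenvalues indexed by the first
`k` indices through `ρ`. -/
lemma exists_compress (H : Matrix (Fin n) (Fin n) ℂ) (hH : H.IsHermitian) (k : ℕ) (hk : k ≤ n)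
    (ρ : Equiv.Perm (Fin n)) :
    ∃ V : Matrix (Fin n) (Fin k) ℂ, Vᴴ * V = 1 ∧
      ((Vᴴ * H * V).trace).re = ∑ j : Fin k, hH.eigenvalues (ρ (Fin.castLE hk j)) := by
  set U : Matrix (Fin n) (Fin n) ℂ := (hH.eigenvectorUnitary : Matrix (Fin n) (Fin n) ℂ) with hU
  have hUU' : Uᴴ * U = 1 := by
    rw [← Matrix.star_eq_conjTranspose]
    exact (Matrix.mem_unitaryGroup_iff').mp hH.eigenvectorUnitary.2
  set D : Matrix (Fin n) (Fin n) ℂ := Matrix.diagonal (Complex.ofReal ∘ hH.eigenvalues) with hD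
  have hdiag : Uᴴ * H * U = D := by
    rw [hD, hU, ← Matrix.star_eq_conjTranspose]
    have h := hH.conjStarAlgAut_star_eigenvectorUnitary
    rw [Unitary.conjStarAlgAut_apply, Unitary.coe_star, star_star] at h
    exact_mod_cast h
  set E : Matrix (Fin n) (Fin k) ℂ :=
    Matrix.of (fun i j => if i = ρ (Fin.castLE hk j) then 1 else 0) with hE
  have hEME : ∀ M : Matrix (Fin n) (Fin n) ℂ, ∀ j j' : Fin k,
      (Eᴴ * M * E) j j' = M (ρ (Fin.castLE hk j)) (ρ (Fin.castLE hk j')) := by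
    intro M j j'
    simp [Matrix.mul_apply, hE, Matrix.conjTranspose_apply, apply_ite,
      Finset.sum_ite_eq, Finset.sum_ite_eq']
  refine ⟨U * E, ?_, ?_⟩
  · have h1 : (U * E)ᴴ * (U * E) = Eᴴ * (Uᴴ * U) * E := by
      rw [Matrix.conjTranspose_mul]
      simp only [Matrix.mul_assoc]
    rw [h1, hUU', Matrix.mul_one]
    ext j j'
    have hone := hEME 1 j j'
    rw [Matrix.mul_one] at hone
    rw [hone]
    by_cases h : j = j'
    · simp [h, Matrix.one_apply]
    · have : ρ (Fin.castLE hk j) ≠ ρ (Fin.castLE hk j') := by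
        simp only [ne_eq, EmbeddingLike.apply_eq_iff_eq]
        exact fun hc => h (Fin.castLE_injective hk hc)
      simp [Matrix.one_apply, this, h]
  · have h2 : (U * E)ᴴ * H * (U * E) = Eᴴ * (Uᴴ * H * U) * E := by
      rw [Matrix.conjTranspose_mul]
      simp only [Matrix.mul_assoc]
    rw [h2, hdiag]
    have h3 : (Eᴴ * D * E).trace = ∑ j : Fin k, ((hH.eigenvalues (ρ (Fin.castLE hk j)) : ℝ) : ℂ) := by
      rw [Matrix.trace]
      apply Finset.sum_congr rfl
      intro j _
      rw [Matrix.diag_apply, hEME D j j, hD]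
      simp [Matrix.diagonal_apply]
    rw [h3]
    rw [Complex.re_sum]
    simp

/-- The sum of the eigenvalues of a Hermitian matrix is the real part of its trace. -/
lemma sum_eigenvalues_eq_retrace (A : Matrix (Fin n) (Fin n) ℂ) (hA : A.IsHermitian) :
    ∑ i, hA.eigenvalues i = A.trace.re := by
  set U : Matrix (Fin n) (Fin n) ℂ := (hA.eigenvectorUnitary : Matrix (Fin n) (Fin n) ℂ) with hU
  have hUU' : Uᴴ * U = 1 := by
    rw [← Matrix.star_eq_conjTranspose]
    exact (Matrix.mem_unitaryGroup_iff').mp hA.eigenvectorUnitary.2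
  have hspec : A = U * Matrix.diagonal (Complex.ofReal ∘ hA.eigenvalues) * Uᴴ := by
    rw [hU, ← Matrix.star_eq_conjTranspose]
    exact_mod_cast hA.spectral_theorem
  have h1 : A.trace = ∑ i, ((hA.eigenvalues i : ℝ) : ℂ) := by
    conv_lhs => rw [hspec]
    rw [Matrix.trace_mul_cycle, hUU', Matrix.one_mul]
    simp [Matrix.trace, Matrix.diag, Matrix.diagonal_apply]
  rw [h1, Complex.re_sum]
  simp

end Aux

/-- Rearrangement lower bound: if μX, μY are the eigenvalues of the positive
definite matrices X, Y arranged in decreasing order, then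
Tr(log(X+Y)) ≥ ∑ₖ log(μₖ(X) + μₖ(Y)). -/
theorem trlog_sum_rearrangement_lower_bound {n : ℕ}
    (X Y : Matrix (Fin n) (Fin n) ℂ) (hX : X.PosDef) (hY : Y.PosDef)
    (μX μY : Fin n → ℝ) (σ τ : Equiv.Perm (Fin n))
    (hσ : μX = hX.1.eigenvalues ∘ σ) (hτ : μY = hY.1.eigenvalues ∘ τ)
    (hmX : Antitone μX) (hmY : Antitone μY) :
    ∑ k, Real.log (μX k + μY k) ≤ trFun Real.log (X + Y) := by
  classical
  have hHpd : (X + Y).PosDef := hX.add hY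
  have hHh : (X + Y).IsHermitian := hHpd.1
  -- sorting permutation for X + Y
  set ρ : Equiv.Perm (Fin n) := Tuple.sort (fun i => -hHh.eigenvalues i) with hρ
  set lam : Fin n → ℝ := hHh.eigenvalues ∘ ρ with hlamdef
  have hlam : Antitone lam := by
    intro i j hij
    have := Tuple.monotone_sort (fun i => -hHh.eigenvalues i) hij
    simp only [Function.comp_apply] at this
    simp only [hlamdef, hρ, Function.comp_apply]
    linarith
  set μ : Fin n → ℝ := fun i => μX i + μY i with hμ
  have hμXpos : ∀ i, 0 < μX i := fun i => by rw [hσ]; exact hX.eigenvalues_pos _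
  have hμYpos : ∀ i, 0 < μY i := fun i => by rw [hτ]; exact hY.eigenvalues_pos _
  have hμpos : ∀ i, 0 < μ i := fun i => by
    simp only [hμ]; exact add_pos (hμXpos i) (hμYpos i)
  have hlampos : ∀ i, 0 < lam i := fun i => hHpd.eigenvalues_pos _
  -- Ky Fan majorization
  have kyfan : ∀ k, k ≤ n →
      ∑ i ∈ Finset.univ.filter (fun i : Fin n => (i : ℕ) < k), lam i
        ≤ ∑ i ∈ Finset.univ.filter (fun i : Fin n => (i : ℕ) < k), μ i := by
    intro k hk
    obtain ⟨V, hV, hVtr⟩ := exists_compress (X + Y) hHh k hk ρ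
    have hsplit : Vᴴ * (X + Y) * V = Vᴴ * X * V + Vᴴ * Y * V := by
      rw [Matrix.mul_add, Matrix.add_mul]
    have htr : ((Vᴴ * (X + Y) * V).trace).re
        = ((Vᴴ * X * V).trace).re + ((Vᴴ * Y * V).trace).re := by
      rw [hsplit, Matrix.trace_add, Complex.add_re]
    have hXle := trace_compress_le X hX.1 k hk V hV μX σ hσ hmX
    have hYle := trace_compress_le Y hY.1 k hk V hV μY τ hτ hmY
    have hfilter : ∑ j : Fin k, hHh.eigenvalues (ρ (Fin.castLE hk j))
        = ∑ i ∈ Finset.univ.filter (fun i : Fin n => (i : ℕ) < k), lam i := by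
      rw [sum_filter_eq_sum_range lam k hk,
        ← Fin.sum_univ_eq_sum_range (fun i => ext0 lam i) k]
      apply Finset.sum_congr rfl
      intro j _
      have hj : (j : ℕ) < n := lt_of_lt_of_le j.isLt hk
      simp only [ext0, dif_pos hj, hlamdef, Function.comp_apply]
      rfl
    have hμsum : ∑ i ∈ Finset.univ.filter (fun i : Fin n => (i : ℕ) < k), μ i
        = ∑ i ∈ Finset.univ.filter (fun i : Fin n => (i : ℕ) < k), μX i
          + ∑ i ∈ Finset.univ.filter (fun i : Fin n => (i : ℕ) < k), μY i := by
      simp only [hμ]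
      exact Finset.sum_add_distrib
    rw [← hfilter, hμsum, ← hVtr, htr]
    exact add_le_add hXle hYle
  -- total sums agree
  have htot : ∑ i, lam i = ∑ i, μ i := by
    have e1 : ∑ i, lam i = ∑ i, hHh.eigenvalues i :=
      Equiv.sum_comp ρ hHh.eigenvalues
    have e2 : ∑ i, μX i = ∑ i, hX.1.eigenvalues i := by
      rw [hσ]; exact Equiv.sum_comp σ hX.1.eigenvalues
    have e3 : ∑ i, μY i = ∑ i, hY.1.eigenvalues i := by
      rw [hτ]; exact Equiv.sum_comp τ hY.1.eigenvalues
    have e4 : ((X + Y).trace).re = (X.trace).re + (Y.trace).re := by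
      rw [Matrix.trace_add, Complex.add_re]
    have e5 : ∑ i, μ i = ∑ i, μX i + ∑ i, μY i := by
      simp only [hμ]; exact Finset.sum_add_distrib
    rw [e1, e5, e2, e3, sum_eigenvalues_eq_retrace (X + Y) hHh,
      sum_eigenvalues_eq_retrace X hX.1, sum_eigenvalues_eq_retrace Y hY.1, e4]
  -- apply HLP
  have hfun : Finset.univ.filter (fun i : Fin n => (i : ℕ) < n) = Finset.univ :=
    Finset.filter_true_of_mem (fun i _ => i.isLt)
  have main : ∑ i ∈ Finset.range n, Real.log (ext0 μ i)
      ≤ ∑ i ∈ Finset.range n, Real.log (ext0 lam i) := by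
    apply aux_hlp_log n (ext0 lam) (ext0 μ)
    · intro i hi
      simp only [ext0, dif_pos hi]
      exact hlampos _
    · intro i hi
      simp only [ext0, dif_pos hi]
      exact hμpos _
    · intro i j hij hj
      have hi : i < n := lt_of_le_of_lt hij hj
      simp only [ext0, dif_pos hi, dif_pos hj]
      exact hlam (by simp [Fin.le_def, hij])
    · intro k hk
      rw [← sum_filter_eq_sum_range lam k hk, ← sum_filter_eq_sum_range μ k hk]
      exact kyfan k hk
    · rw [← sum_filter_eq_sum_range lam n le_rfl, ← sum_filter_eq_sum_range μ n le_rfl,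
        hfun]
      exact htot
  have lhs_eq : ∑ k, Real.log (μX k + μY k) = ∑ i ∈ Finset.range n, Real.log (ext0 μ i) := by
    rw [← Fin.sum_univ_eq_sum_range (fun i => Real.log (ext0 μ i)) n]
    apply Finset.sum_congr rfl
    intro i _
    simp only [ext0, dif_pos i.isLt, hμ, Fin.eta]
  have rhs_eq : trFun Real.log (X + Y) = ∑ i ∈ Finset.range n, Real.log (ext0 lam i) := by
    have h1 : trFun Real.log (X + Y) = ∑ i, Real.log (hHh.eigenvalues i) := by
      simp only [trFun]
      rw [dif_pos hHh]
    have h2 : ∑ i, Real.log (hHh.eigenvalues i) = ∑ i, Real.log (lam i) :=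
      (Equiv.sum_comp ρ (fun i => Real.log (hHh.eigenvalues i))).symm
    rw [h1, h2, ← Fin.sum_univ_eq_sum_range (fun i => Real.log (ext0 lam i)) n]
    apply Finset.sum_congr rfl
    intro i _
    simp only [ext0, dif_pos i.isLt, Fin.eta]
  rw [lhs_eq, rhs_eq]
  exact main
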